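/- Fix τ ∈ K, char K = 0, τ ≠ 0. In K[[x₁,x₂]], define G(x₁,x₂) = -((τ+1)/τ)·Σ_{μ₁,μ₂≥1} (x₁^{μ₁}x₂^{μ₂}/(μ₁+μ₂))·∏_{i=1,2}(∏_{a=0}^{μ_i-1}(μ_iτ+a)/μ_i!). Let ω_i = ω(x_i) be the compositional inverse series of x(1-x)^τ evaluated in x_i. Then (x₁∂/∂x₁ + x₂∂/∂x₂)G = -τ(τ+1)·ω₁ω₂/((1-(τ+1)ω₁)(1-(τ+1)ω₂)). -/

import Mathlib

open Finset

variable {K : Type*} [Field K]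

/-- `p τ m = ∏_{a=0}^{m-1}(mτ+a)/m!`. -/
noncomputable def pCoeff [CharZero K] (τ : K) (m : ℕ) : K :=
  (∏ a ∈ Finset.range m, ((m : K) * τ + a)) / (m.factorial : K)

/-- Coefficients of `ω(x) = ∑_{n≥1} (∏_{a=0}^{n-2}(nτ+a)/n!) x^n`, the compositional
inverse of `x(1-x)^τ`. -/
noncomputable def omegaCoeff [CharZero K] (τ : K) (n : ℕ) : K :=
  if n = 0 then 0 else (∏ a ∈ Finset.range (n - 1), ((n : K) * τ + a)) / (n.factorial : K)

/-- `ω(x_i)`: the series `ω` in the variable `x_i`, as a two-variable power series. -/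
noncomputable def OmegaVar [CharZero K] (τ : K) (i : Fin 2) : MvPowerSeries (Fin 2) K :=
  fun d => if d = Finsupp.single i (d i) then omegaCoeff τ (d i) else 0

/-- `G(x₁,x₂) = -((τ+1)/τ) ∑_{μ₁,μ₂≥1} (x₁^{μ₁}x₂^{μ₂}/(μ₁+μ₂)) ∏_i (∏_{a=0}^{μ_i-1}(μ_iτ+a)/μ_i!)`. -/
noncomputable def Gseries [CharZero K] (τ : K) : MvPowerSeries (Fin 2) K :=
  fun d =>
    if 1 ≤ d 0 ∧ 1 ≤ d 1 then
      -((τ + 1) / τ) * ((d 0 + d 1 : ℕ) : K)⁻¹ * pCoeff τ (d 0) * pCoeff τ (d 1)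
    else 0

/-- The two-variable Euler operator `x₁∂/∂x₁ + x₂∂/∂x₂`. -/
noncomputable def euler2 (A : MvPowerSeries (Fin 2) K) : MvPowerSeries (Fin 2) K :=
  fun d => ((d 0 + d 1 : ℕ) : K) * MvPowerSeries.coeff (R := K) d A


/-! Coefficientwise, `(x₁∂₁ + x₂∂₂)G = -((τ+1)/τ) P(x₁) P(x₂)` with `P(x) = ∑_{m≥1} p_m x^m`,
so everything reduces to the one-variable identity `(1 - (τ+1)ω) P = τ ω`.

Put `z = τ + 1`, `B_k(y) = C(y + kz, k)` and `A_k(x) = x/(x + kz) · C(x + kz, k)`.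
Then `p_k = B_k(-1)`, and the coefficients of `1 - ω` are
`A_k(-1) = z B_k(-2) - (z - 1) B_k(-1)`. The Hagen–Rothe identity
`∑_{i+j=n} A_i(x) B_j(y) = B_n(x + y)` at `x = y = -1` says `(1 - ω) · ∑ p_m x^m = ∑ B_m(-2) x^m`;
eliminating `∑ B_m(-2) x^m` between these two relations gives the one-variable identity.
Hagen–Rothe is a polynomial identity in `x`, so it suffices to prove it for `x ∈ ℕ`, which is an
induction on `x` driven by Pascal's rule, starting from `A_k(0) = 0` for `k > 0`. -/

namespace Ring

variable [CharZero K]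

theorem choose_eq_prod_range_div (a : K) (k : ℕ) :
    choose a k = (∏ i ∈ range k, (a - i)) / k.factorial := by
  rw [choose_eq_smul, ← Polynomial.aeval_eq_smeval, ← Polynomial.eval_map_algebraMap,
    descPochhammer_map, descPochhammer_eval_eq_prod_range, smul_eq_mul, div_eq_inv_mul]

theorem choose_succ_right_eq (a : K) (k : ℕ) :
    choose a (k + 1) * (k + 1) = choose a k * (a - k) := by
  have hk : (k.factorial : K) ≠ 0 := Nat.cast_ne_zero.2 k.factorial_ne_zero
  rw [choose_eq_prod_range_div, choose_eq_prod_range_div, prod_range_succ, Nat.factorial_succ]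
  push_cast
  field_simp

end Ring

section Rothe

variable {R S : Type*} [CommRing R] [BinomialRing R] [CommRing S] [BinomialRing S]

def rotheB (z y : R) (k : ℕ) : R := Ring.choose (y + k * z) k

/-- Rothe's coefficient `x / (x + k z) * choose (x + k z) k`, written without division. -/
def rotheA (z x : R) (k : ℕ) : R := z * rotheB z (x - 1) k - (z - 1) * rotheB z x k

@[simp]
theorem rotheB_zero (z y : R) : rotheB z y 0 = 1 := by simp [rotheB]

@[simp]
theorem rotheA_zero (z x : R) : rotheA z x 0 = 1 := by simp [rotheA]

theorem map_rotheB (f : R →+* S) (z y : R) (k : ℕ) :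
    f (rotheB z y k) = rotheB (f z) (f y) k := by
  simp [rotheB, Ring.map_choose]

theorem map_rotheA (f : R →+* S) (z x : R) (k : ℕ) :
    f (rotheA z x k) = rotheA (f z) (f x) k := by
  simp [rotheA, map_rotheB]

theorem rotheB_succ (z y : R) (k : ℕ) :
    rotheB z y (k + 1) = rotheB z (y - 1) (k + 1) + rotheB z (y + z - 1) k := by
  have h := Ring.choose_succ_succ (y + (k + 1 : ℕ) * z - 1) k
  simp only [rotheB]
  push_cast at *
  ring_nf at *
  linear_combination h

theorem rotheA_succ (z x : R) (k : ℕ) :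
    rotheA z x (k + 1) = rotheA z (x - 1) (k + 1) + rotheA z (x + z - 1) k := by
  simp only [rotheA, rotheB_succ z x, rotheB_succ z (x - 1), sub_add_eq_add_sub]
  ring

theorem sum_rotheA_mul_rotheB_succ (z x y : R) (n : ℕ) :
    ∑ p ∈ antidiagonal (n + 1), rotheA z x p.1 * rotheB z y p.2
      = ∑ p ∈ antidiagonal (n + 1), rotheA z (x - 1) p.1 * rotheB z y p.2
        + ∑ p ∈ antidiagonal n, rotheA z (x + z - 1) p.1 * rotheB z y p.2 := by
  rw [Nat.sum_antidiagonal_succ, Nat.sum_antidiagonal_succ]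
  simp only [rotheA_succ z x, add_mul, sum_add_distrib, rotheA_zero, one_mul]
  ring

end Rothe

theorem Polynomial.eq_of_eval_natCast_eq [CharZero K] {p q : Polynomial K}
    (h : ∀ m : ℕ, p.eval (m : K) = q.eval (m : K)) : p = q :=
  eq_of_infinite_eval_eq p q <|
    (Set.infinite_range_of_injective Nat.cast_injective).mono (by rintro _ ⟨m, rfl⟩; exact h m)

section HagenRothe

variable [CharZero K]

@[simp]
theorem Polynomial.eval_rotheB (x : K) (z a : Polynomial K) (k : ℕ) :
    (rotheB z a k).eval x = rotheB (z.eval x) (a.eval x) k :=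
  map_rotheB (evalRingHom x) z a k

@[simp]
theorem Polynomial.eval_rotheA (x : K) (z a : Polynomial K) (k : ℕ) :
    (rotheA z a k).eval x = rotheA (z.eval x) (a.eval x) k :=
  map_rotheA (evalRingHom x) z a k

theorem rotheA_zero_succ (z : K) (k : ℕ) : rotheA z 0 (k + 1) = 0 := by
  have hk : (k : K) + 1 ≠ 0 := by exact_mod_cast k.succ_ne_zero
  have habs := Ring.choose_succ_right_eq ((k + 1 : ℕ) * z - 1) k
  have hpascal := Ring.choose_succ_succ ((k + 1 : ℕ) * z - 1) k
  simp only [rotheA, rotheB, zero_sub, zero_add, sub_add_cancel] at *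
  rw [neg_add_eq_sub, hpascal]
  apply mul_right_cancel₀ hk
  push_cast at *
  linear_combination habs

theorem sum_rotheA_mul_rotheB (z x y : K) (n : ℕ) :
    ∑ p ∈ antidiagonal n, rotheA z x p.1 * rotheB z y p.2 = rotheB z (x + y) n := by
  induction n generalizing x y with
  | zero => simp [rotheB]
  | succ n ih =>
    have hnat (m : ℕ) : ∑ p ∈ antidiagonal (n + 1), rotheA z m p.1 * rotheB z y p.2
        = rotheB z (m + y) (n + 1) := by
      induction m with
      | zero => simp [Nat.sum_antidiagonal_succ, rotheA_zero_succ]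
      | succ m ihm =>
        rw [sum_rotheA_mul_rotheB_succ, ih, Nat.cast_succ, add_sub_cancel_right, ihm,
          rotheB_succ z (m + 1 + y)]
        ring_nf
    open Polynomial in
    have hpoly : ∑ p ∈ antidiagonal (n + 1), rotheA (C z) X p.1 * rotheB (C z) (C y) p.2
        = rotheB (C z) (X + C y) (n + 1) :=
      eq_of_eval_natCast_eq fun m ↦ by simpa [eval_finsetSum] using hnat m
    simpa [Polynomial.eval_finsetSum] using congrArg (Polynomial.eval x) hpoly

end HagenRothe

section OneVariable

open PowerSeries

variable [CharZero K] (τ : K)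

noncomputable def omegaSeries : PowerSeries K := mk (omegaCoeff τ)

noncomputable def pSeries : PowerSeries K := mk (pCoeff τ)

theorem pCoeff_eq_rotheB (m : ℕ) : pCoeff τ m = rotheB (τ + 1) (-1) m := by
  rw [pCoeff, rotheB, Ring.choose_eq_prod_range_div, ← prod_range_reflect]
  congr 1
  refine prod_congr rfl fun i hi ↦ ?_
  push_cast [Nat.sub_sub, Nat.cast_sub (show 1 + i ≤ m by have := mem_range.1 hi; lia)]
  ring

theorem omegaCoeff_succ_mul (k : ℕ) :
    omegaCoeff τ (k + 1) * (k + 1) = Ring.choose ((k + 1 : ℕ) * (τ + 1) - 2) k := by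
  have hk : (k : K) + 1 ≠ 0 := by exact_mod_cast k.succ_ne_zero
  have hfac : (k.factorial : K) ≠ 0 := Nat.cast_ne_zero.2 k.factorial_ne_zero
  have hreflect : ∏ j ∈ range k, (((k + 1 : ℕ) : K) * τ + ((k - 1 - j : ℕ) : K))
      = ∏ i ∈ range k, (((k + 1 : ℕ) : K) * (τ + 1) - 2 - i) := by
    refine prod_congr rfl fun i hi ↦ ?_
    push_cast [Nat.sub_sub, Nat.cast_sub (show 1 + i ≤ k by have := mem_range.1 hi; lia)]
    ring
  rw [omegaCoeff, if_neg k.succ_ne_zero, Ring.choose_eq_prod_range_div, Nat.add_sub_cancel,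
    ← prod_range_reflect, Nat.factorial_succ, hreflect]
  push_cast
  field_simp

theorem rotheA_neg_one (k : ℕ) : rotheA (τ + 1) (-1) k = coeff k (1 - omegaSeries τ) := by
  rcases k with _ | k
  · simp [omegaSeries, omegaCoeff]
  have hk : (k : K) + 1 ≠ 0 := by exact_mod_cast k.succ_ne_zero
  have habs := Ring.choose_succ_right_eq (((k + 1 : ℕ) : K) * (τ + 1) - 2) k
  have hω := omegaCoeff_succ_mul τ k
  simp only [rotheA, rotheB, omegaSeries, map_sub, coeff_one, coeff_mk, if_neg k.succ_ne_zero,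
    zero_sub]
  rw [show -1 - 1 + ((k + 1 : ℕ) : K) * (τ + 1) = ((k + 1 : ℕ) : K) * (τ + 1) - 2 by ring,
    show -1 + ((k + 1 : ℕ) : K) * (τ + 1) = ((k + 1 : ℕ) : K) * (τ + 1) - 2 + 1 by ring,
    Ring.choose_succ_succ]
  apply mul_right_cancel₀ hk
  push_cast at *
  linear_combination habs + hω

theorem one_sub_omegaSeries_mul_pSeries :
    (1 - omegaSeries τ) * pSeries τ = mk (rotheB (τ + 1) (-2)) := by
  ext n
  simp only [coeff_mul, coeff_mk, pSeries, ← rotheA_neg_one, pCoeff_eq_rotheB,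
    sum_rotheA_mul_rotheB]
  norm_num

theorem one_sub_omegaSeries_eq :
    1 - omegaSeries τ = C (τ + 1) * mk (rotheB (τ + 1) (-2)) - C τ * pSeries τ := by
  ext n
  rw [← rotheA_neg_one]
  simp only [rotheA, map_sub, coeff_C_mul, coeff_mk, pSeries, pCoeff_eq_rotheB]
  norm_num

theorem one_sub_C_mul_omegaSeries_mul_pSeries :
    (1 - C (τ + 1) * omegaSeries τ) * pSeries τ = 1 - omegaSeries τ := by
  have hB := one_sub_omegaSeries_eq τ
  rw [map_add, map_one] at *
  linear_combination (C τ + 1) * one_sub_omegaSeries_mul_pSeries τ - hB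

end OneVariable

section TwoVariables

open MvPowerSeries

variable [CharZero K] (τ : K)

theorem OmegaVar_eq_subst (i : Fin 2) : OmegaVar τ i = (omegaSeries τ).subst (X i) := by
  ext d
  rw [PowerSeries.coeff_subst_single, omegaSeries, PowerSeries.coeff_mk]
  rfl

theorem constantCoeff_OmegaVar (i : Fin 2) : constantCoeff (OmegaVar τ i) = 0 := by
  rw [← coeff_zero_eq_constantCoeff_apply, OmegaVar_eq_subst, PowerSeries.coeff_subst_single]
  simp [omegaSeries, omegaCoeff]

theorem one_sub_C_mul_OmegaVar_mul_subst (i : Fin 2) :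
    (1 - C (τ + 1) * OmegaVar τ i) * (pSeries τ - 1).subst (X i) = C τ * OmegaVar τ i := by
  have h : (1 - PowerSeries.C (τ + 1) * omegaSeries τ) * (pSeries τ - 1)
      = PowerSeries.C τ * omegaSeries τ := by
    have := one_sub_C_mul_omegaSeries_mul_pSeries τ
    rw [map_add, map_one] at *
    linear_combination this
  rw [OmegaVar_eq_subst]
  generalize pSeries τ - 1 = P at h ⊢
  have := congrArg (PowerSeries.substAlgHom (PowerSeries.HasSubst.X (S := K) i)) h
  simp only [map_mul, map_sub, map_one, map_add, PowerSeries.coe_substAlgHom,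
    PowerSeries.subst_C] at this
  simpa using this

theorem euler2_Gseries :
    euler2 (Gseries τ)
      = C (-((τ + 1) / τ)) * ((pSeries τ - 1).subst (X 0) * (pSeries τ - 1).subst (X 1)) := by
  ext d
  rw [coeff_C_mul, PowerSeries.coeff_subst_X_zero_subst_mul_X_one]
  change ((d 0 + d 1 : ℕ) : K) * (if 1 ≤ d 0 ∧ 1 ≤ d 1 then _ else 0) = _
  simp only [pSeries, map_sub, PowerSeries.coeff_mk, PowerSeries.coeff_one]
  by_cases hd : 1 ≤ d 0 ∧ 1 ≤ d 1
  · have hsum : ((d 0 + d 1 : ℕ) : K) ≠ 0 := by exact_mod_cast (show d 0 + d 1 ≠ 0 by lia)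
    rw [if_pos hd, if_neg (by lia), if_neg (by lia), sub_zero, sub_zero]
    field_simp
  · rw [if_neg hd, mul_zero]
    obtain hd | hd : d 0 = 0 ∨ d 1 = 0 := by lia
    all_goals simp [hd, pCoeff]

end TwoVariables

/-- `(x₁∂/∂x₁ + x₂∂/∂x₂)G = -τ(τ+1)·ω₁ω₂/((1-(τ+1)ω₁)(1-(τ+1)ω₂))`. -/
theorem euler2_G [CharZero K] (τ : K) (hτ : τ ≠ 0) :
    euler2 (Gseries τ)
      = -(MvPowerSeries.C (σ := Fin 2) (R := K) (τ * (τ + 1))) * OmegaVar τ 0 * OmegaVar τ 1 *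
          ((1 - MvPowerSeries.C (σ := Fin 2) (R := K) (τ + 1) * OmegaVar τ 0) *
            (1 - MvPowerSeries.C (σ := Fin 2) (R := K) (τ + 1) * OmegaVar τ 1))⁻¹ := by
  open MvPowerSeries in
  have hunit : constantCoeff ((1 - C (τ + 1) * OmegaVar τ 0) * (1 - C (τ + 1) * OmegaVar τ 1))
      ≠ 0 := by
    simp [constantCoeff_OmegaVar]
  rw [MvPowerSeries.eq_mul_inv_iff_mul_eq hunit, euler2_Gseries]
  have hscalar : -((τ + 1) / τ) * τ * τ = -(τ * (τ + 1)) := by field_simp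
  open MvPowerSeries in
  calc _ = C (-((τ + 1) / τ))
          * ((1 - C (τ + 1) * OmegaVar τ 0) * (pSeries τ - 1).subst (X 0))
          * ((1 - C (τ + 1) * OmegaVar τ 1) * (pSeries τ - 1).subst (X 1)) := by ring
    _ = C (-((τ + 1) / τ) * τ * τ) * OmegaVar τ 0 * OmegaVar τ 1 := by
      rw [one_sub_C_mul_OmegaVar_mul_subst, one_sub_C_mul_OmegaVar_mul_subst, map_mul, map_mul]
      ring
    _ = _ := by rw [hscalar, map_neg]
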